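/- Assume the balance condition α + γ > 1 and set δ = 1 − 1/α + γ/α > 0. For every λ ∈ [0,α) and every T > 0 there exist constants C₁, C₂ > 0 such that for all t ∈ (0,T], s ∈ [0,t], and x, y ∈ ℝ^d, one has C₁ H_t^(λ)(x,y) ≤ K_t^(λ)( υ_{t−s}^{t−s}(x), θ_s^0(y) ) ≤ C₂ H_t^(λ)(x,y). -/

import Mathlib

/-! Write `σ = t^{1/α}`. The kernel `K_t^{(λ)}(x, y)` depends on `(x, y)` only through
`max (|y - x| / σ) 1`, and multiplying that quantity by a factor in `[A⁻¹, A]` changes the kernel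
by a factor in `[A^{-(λ+d+α)}, A^{λ+d+α}]`. Both `θ_t - x` and `θ_s - υ_{t-s}` are values of the
gap `ψ p = θ_p - υ_{t-p}`, `p ∈ [s, t]`. The mollified drift is `γ`-Hölder with the constant of `b`
and lies within `O(τ^{γ/α})` of `b`, so `|ψ'| ≤ C₀ |ψ|^γ + c σ^γ`; since
`|ψ|^γ ≤ σ^γ + σ^{γ-1} |ψ|`, Grönwall over an interval of length `≤ t` changes `max (|ψ| / σ) 1`
by at most a factor `(1 + c' t^δ) exp (C₀ t^δ)`, which is bounded for `t ≤ T` because `δ > 0`.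
-/

open MeasureTheory Real Set

/-- `Euc d` is the Euclidean space `ℝ^d`. -/
abbrev Euc (d : ℕ) := EuclideanSpace ℝ (Fin d)

/-- The Gaussian mollification `b(t,x)` of the drift `b` at scale `t^{1/α}`:
`b(t,x) = (2π)^{-d/2} t^{-d/α} ∫ b(z) exp(-|z-x|²/(2 t^{2/α})) dz` for `t > 0`
(with the natural boundary value `b(x)` for `t ≤ 0`). -/
noncomputable def moll (d : ℕ) (α : ℝ) (b : Euc d → Euc d) (t : ℝ) (x : Euc d) : Euc d :=
  if t ≤ 0 then b x
  else ((2 * Real.pi) ^ (-(d : ℝ) / 2) * t ^ (-(d : ℝ) / α)) •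
    ∫ z : Euc d, Real.exp (-‖z - x‖ ^ 2 / (2 * t ^ (2 / α))) • b z

/-- `IsSol F x0 f` : `f` solves the Cauchy problem `f' (t) = F t (f t)` on `[0,∞)`, `f 0 = x0`. -/
def IsSol (d : ℕ) (F : ℝ → Euc d → Euc d) (x0 : Euc d) (f : ℝ → Euc d) : Prop :=
  f 0 = x0 ∧ ∀ t : ℝ, 0 ≤ t → HasDerivWithinAt f (F t (f t)) (Set.Ici 0) t

/-- The kernel `G^{(λ)}(x) = (|x| ∨ 1)^{-d-λ}`. -/
noncomputable def Gfun (d : ℕ) (lam : ℝ) (x : Euc d) : ℝ :=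
  (max ‖x‖ 1) ^ (-(d : ℝ) - lam)

/-- The kernel
`K_t^{(λ)}(x,y) = (((|y-x|/t^{1/α})^λ ∨ 1) ∧ t^{-λ/α}) · t^{-d/α} G^{(α)}((y-x)/t^{1/α})`. -/
noncomputable def Kker (d : ℕ) (α lam : ℝ) (t : ℝ) (x y : Euc d) : ℝ :=
  min (max ((‖y - x‖ / t ^ (1 / α)) ^ lam) 1) (t ^ (-(lam / α))) *
    (t ^ (-(d : ℝ) / α) * Gfun d α ((t ^ (1 / α))⁻¹ • (y - x)))

lemma rpow_le_one_add_sq {q γ : ℝ} (hq : 0 ≤ q) (hγ0 : 0 ≤ γ) (hγ2 : γ ≤ 2) :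
    q ^ γ ≤ 1 + q ^ 2 := by
  rcases le_total q 1 with hq1 | hq1
  · nlinarith [Real.rpow_le_one hq hq1 hγ0, sq_nonneg q]
  · have := Real.rpow_le_rpow_of_exponent_le hq1 hγ2
    norm_cast at this
    linarith

lemma mul_exp_neg_two_mul_le (y : ℝ) : y * rexp (-(2 * y)) ≤ rexp (-y) := by
  have h : y * rexp (-y) ≤ 1 := by
    rw [Real.exp_neg, ← div_eq_mul_inv, div_le_one (Real.exp_pos y)]
    linarith [Real.add_one_le_exp y]
  calc y * rexp (-(2 * y)) = y * rexp (-y) * rexp (-y) := by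
        rw [mul_assoc, ← Real.exp_add]; ring_nf
    _ ≤ rexp (-y) := by nlinarith [Real.exp_pos (-y)]

section HeatKernel

variable {V : Type*} [NormedAddCommGroup V] [InnerProductSpace ℝ V]

variable (V) in
noncomputable def heatKernel (v : ℝ) (w : V) : ℝ :=
  (2 * π * v) ^ (-(Module.finrank ℝ V : ℝ) / 2) * rexp (-(2 * v)⁻¹ * ‖w‖ ^ 2)

lemma heatKernel_nonneg {v : ℝ} (hv : 0 < v) (w : V) : 0 ≤ heatKernel V v w := by
  unfold heatKernel; positivity

lemma heatKernel_mul_rpow_norm_le {v γ : ℝ} (hv : 0 < v) (hγ0 : 0 ≤ γ) (hγ2 : γ ≤ 2) (w : V) :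
    heatKernel V v w * ‖w‖ ^ γ ≤
      v ^ (γ / 2) * (heatKernel V v w + 4 * 2 ^ ((Module.finrank ℝ V : ℝ) / 2) *
        heatKernel V (2 * v) w) := by
  set n : ℝ := (Module.finrank ℝ V : ℝ)
  set y := (4 * v)⁻¹ * ‖w‖ ^ 2
  have hsqrt : (v ^ (1 / 2 : ℝ)) ^ 2 = v := by
    rw [← Real.rpow_natCast, ← Real.rpow_mul hv.le]; norm_num
  have hnorm : ‖w‖ ^ γ ≤ v ^ (γ / 2) * (1 + 4 * y) := by
    have h := rpow_le_one_add_sq (div_nonneg (norm_nonneg w) (Real.rpow_pos_of_pos hv (1 / 2)).le)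
      hγ0 hγ2
    rw [Real.div_rpow (norm_nonneg w) (Real.rpow_pos_of_pos hv _).le, ← Real.rpow_mul hv.le,
      div_le_iff₀ (by positivity), div_pow, hsqrt] at h
    refine h.trans_eq ?_
    rw [one_div_mul_eq_div]
    simp only [y]; field_simp
  have hexp : 4 * y * rexp (-(2 * v)⁻¹ * ‖w‖ ^ 2) ≤ 4 * rexp (-(2 * (2 * v))⁻¹ * ‖w‖ ^ 2) := by
    have h := mul_exp_neg_two_mul_le y
    have e1 : -(2 * v)⁻¹ * ‖w‖ ^ 2 = -(2 * y) := by simp only [y]; field_simp; ring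
    have e2 : -(2 * (2 * v))⁻¹ * ‖w‖ ^ 2 = -y := by simp only [y]; ring
    rw [e1, e2]; linarith
  have hpref : 2 ^ (n / 2) * (2 * π * (2 * v)) ^ (-n / 2) = (2 * π * v) ^ (-n / 2) := by
    rw [show 2 * π * (2 * v) = 2 * (2 * π * v) by ring, Real.mul_rpow (by norm_num) (by positivity),
      ← mul_assoc, ← Real.rpow_add (by norm_num)]
    simp [neg_div]
  unfold heatKernel
  calc (2 * π * v) ^ (-n / 2) * rexp (-(2 * v)⁻¹ * ‖w‖ ^ 2) * ‖w‖ ^ γ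
      ≤ (2 * π * v) ^ (-n / 2) * rexp (-(2 * v)⁻¹ * ‖w‖ ^ 2) * (v ^ (γ / 2) * (1 + 4 * y)) := by
        gcongr
    _ = v ^ (γ / 2) * ((2 * π * v) ^ (-n / 2) * (rexp (-(2 * v)⁻¹ * ‖w‖ ^ 2)
          + 4 * y * rexp (-(2 * v)⁻¹ * ‖w‖ ^ 2))) := by ring
    _ ≤ v ^ (γ / 2) * ((2 * π * v) ^ (-n / 2) * (rexp (-(2 * v)⁻¹ * ‖w‖ ^ 2)
          + 4 * rexp (-(2 * (2 * v))⁻¹ * ‖w‖ ^ 2))) := by gcongr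
    _ = _ := by rw [← hpref]; ring

variable [FiniteDimensional ℝ V] [MeasurableSpace V] [BorelSpace V]

lemma integral_heatKernel {v : ℝ} (hv : 0 < v) : ∫ w, heatKernel V v w = 1 := by
  simp only [heatKernel]
  rw [integral_const_mul, GaussianFourier.integral_rexp_neg_mul_sq_norm (by positivity),
    div_inv_eq_mul, ← mul_assoc, mul_comm π 2, neg_div, Real.rpow_neg (by positivity),
    inv_mul_cancel₀ (by positivity)]

lemma integrable_heatKernel {v : ℝ} (hv : 0 < v) : Integrable (heatKernel V v) :=
  Integrable.of_integral_ne_zero (by rw [integral_heatKernel hv]; exact one_ne_zero)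

lemma integrable_heatKernel_mul_rpow_norm {v γ : ℝ} (hv : 0 < v) (hγ0 : 0 ≤ γ) (hγ2 : γ ≤ 2) :
    Integrable (fun w => heatKernel V v w * ‖w‖ ^ γ) := by
  have hmaj : Integrable (fun w => v ^ (γ / 2) * (heatKernel V v w +
      4 * 2 ^ ((Module.finrank ℝ V : ℝ) / 2) * heatKernel V (2 * v) w)) :=
    ((integrable_heatKernel hv).add
      ((integrable_heatKernel (by positivity)).const_mul _)).const_mul _
  refine hmaj.mono' ?_ (ae_of_all _ fun w => ?_)
  · have : Continuous (heatKernel V v) := by unfold heatKernel; fun_prop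
    exact (this.mul (continuous_norm.rpow_const fun _ => Or.inr hγ0)).aestronglyMeasurable
  · rw [Real.norm_of_nonneg (by have := heatKernel_nonneg hv w; positivity)]
    exact heatKernel_mul_rpow_norm_le hv hγ0 hγ2 w

lemma integral_heatKernel_mul_rpow_norm_le {v γ : ℝ} (hv : 0 < v) (hγ0 : 0 ≤ γ) (hγ2 : γ ≤ 2) :
    ∫ w, heatKernel V v w * ‖w‖ ^ γ ≤
      (1 + 4 * 2 ^ ((Module.finrank ℝ V : ℝ) / 2)) * v ^ (γ / 2) := by
  have h2v : (0 : ℝ) < 2 * v := by positivity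
  calc ∫ w, heatKernel V v w * ‖w‖ ^ γ
      ≤ ∫ w, v ^ (γ / 2) * (heatKernel V v w + 4 * 2 ^ ((Module.finrank ℝ V : ℝ) / 2) *
          heatKernel V (2 * v) w) :=
        integral_mono (integrable_heatKernel_mul_rpow_norm hv hγ0 hγ2)
          (((integrable_heatKernel hv).add ((integrable_heatKernel h2v).const_mul _)).const_mul _)
          (heatKernel_mul_rpow_norm_le hv hγ0 hγ2)
    _ = _ := by
        rw [integral_const_mul, integral_add (integrable_heatKernel hv)
          ((integrable_heatKernel h2v).const_mul _), integral_const_mul, integral_heatKernel hv,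
          integral_heatKernel h2v]
        ring

end HeatKernel

lemma continuous_of_norm_sub_le_rpow {E F : Type*} [SeminormedAddCommGroup E]
    [SeminormedAddCommGroup F] {f : E → F} {C γ : ℝ} (hγ : 0 < γ)
    (hf : ∀ x y, ‖f x - f y‖ ≤ C * ‖x - y‖ ^ γ) : Continuous f := by
  refine continuous_iff_continuousAt.2 fun x => tendsto_iff_norm_sub_tendsto_zero.2 ?_
  refine squeeze_zero (fun _ => norm_nonneg _) (fun y => hf y x) ?_
  have : Continuous fun y => C * ‖y - x‖ ^ γ :=
    continuous_const.mul ((continuous_id.sub continuous_const).norm.rpow_const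
      fun _ => Or.inr hγ.le)
  simpa [Real.zero_rpow hγ.ne'] using this.tendsto x

lemma norm_integral_smul_sub_integral_smul_le {Ω E : Type*} [MeasurableSpace Ω] {μ : Measure Ω}
    [NormedAddCommGroup E] [NormedSpace ℝ E] {g h : Ω → ℝ} {F G : Ω → E} (hg : ∀ a, 0 ≤ g a)
    (hF : Integrable (fun a => g a • F a) μ) (hG : Integrable (fun a => g a • G a) μ)
    (hh : Integrable (fun a => g a * h a) μ) (hFG : ∀ a, ‖F a - G a‖ ≤ h a) :
    ‖∫ a, g a • F a ∂μ - ∫ a, g a • G a ∂μ‖ ≤ ∫ a, g a * h a ∂μ := by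
  rw [← integral_sub hF hG]
  refine norm_integral_le_of_norm_le hh (ae_of_all _ fun a => ?_)
  rw [← smul_sub, norm_smul, Real.norm_of_nonneg (hg a)]
  exact mul_le_mul_of_nonneg_left (hFG a) (hg a)

section Mollifier

variable {d : ℕ} {α γ C₀ : ℝ} {b : Euc d → Euc d}

lemma moll_eq_integral_heatKernel {t : ℝ} (ht : 0 < t) (x : Euc d) :
    moll d α b t x = ∫ w, heatKernel (Euc d) (t ^ (2 / α)) w • b (x + w) := by
  have hpref : (2 * π) ^ (-(d : ℝ) / 2) * t ^ (-(d : ℝ) / α) =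
      (2 * π * t ^ (2 / α)) ^ (-(d : ℝ) / 2) := by
    rw [Real.mul_rpow (x := 2 * π) (by positivity) (by positivity), ← Real.rpow_mul ht.le]
    congr 2
    ring
  rw [moll, if_neg ht.not_ge, ← integral_add_left_eq_self _ x, ← integral_smul]
  congr 1
  funext w
  rw [smul_smul, heatKernel, finrank_euclideanSpace_fin, hpref, add_sub_cancel_left]
  congr 3
  ring

lemma integrable_heatKernel_smul {v : ℝ} (hv : 0 < v) (hγ0 : 0 < γ) (hγ2 : γ ≤ 2)
    (hb : ∀ x y, ‖b x - b y‖ ≤ C₀ * ‖x - y‖ ^ γ) (x : Euc d) :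
    Integrable (fun w => heatKernel (Euc d) v w • b (x + w)) := by
  have hmaj : Integrable (fun w => ‖b x‖ * heatKernel (Euc d) v w +
      C₀ * (heatKernel (Euc d) v w * ‖w‖ ^ γ)) :=
    ((integrable_heatKernel hv).const_mul _).add
      ((integrable_heatKernel_mul_rpow_norm hv hγ0.le hγ2).const_mul _)
  have hcont : Continuous (heatKernel (Euc d) v) := by unfold heatKernel; fun_prop
  refine hmaj.mono' ?_ (ae_of_all _ fun w => ?_)
  · exact (hcont.smul ((continuous_of_norm_sub_le_rpow hγ0 hb).comp
      (continuous_const.add continuous_id))).aestronglyMeasurable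
  · have hg := heatKernel_nonneg hv w
    have hbw : ‖b (x + w)‖ ≤ ‖b x‖ + C₀ * ‖w‖ ^ γ := by
      have := hb (x + w) x
      rw [add_sub_cancel_left] at this
      linarith [norm_le_norm_add_norm_sub' (b (x + w)) (b x)]
    rw [norm_smul, Real.norm_of_nonneg hg]
    nlinarith

lemma norm_moll_sub_moll_le (hγ0 : 0 < γ) (hγ2 : γ ≤ 2)
    (hb : ∀ x y, ‖b x - b y‖ ≤ C₀ * ‖x - y‖ ^ γ) (t : ℝ) (x y : Euc d) :
    ‖moll d α b t x - moll d α b t y‖ ≤ C₀ * ‖x - y‖ ^ γ := by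
  rcases le_or_gt t 0 with ht | ht
  · simpa only [moll, if_pos ht] using hb x y
  have hv : 0 < t ^ (2 / α) := by positivity
  rw [moll_eq_integral_heatKernel ht, moll_eq_integral_heatKernel ht]
  refine (norm_integral_smul_sub_integral_smul_le (h := fun _ => C₀ * ‖x - y‖ ^ γ)
    (heatKernel_nonneg hv) (integrable_heatKernel_smul hv hγ0 hγ2 hb x)
    (integrable_heatKernel_smul hv hγ0 hγ2 hb y)
    ((integrable_heatKernel hv).mul_const _) fun w => ?_).trans_eq ?_
  · simpa only [add_sub_add_right_eq_sub] using hb (x + w) (y + w)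
  · rw [integral_mul_const, integral_heatKernel hv, one_mul]

lemma norm_moll_sub_le (hγ0 : 0 < γ) (hγ2 : γ ≤ 2) (hC₀ : 0 ≤ C₀)
    (hb : ∀ x y, ‖b x - b y‖ ≤ C₀ * ‖x - y‖ ^ γ) {t : ℝ} (ht : 0 ≤ t) (x : Euc d) :
    ‖moll d α b t x - b x‖ ≤ C₀ * (1 + 4 * 2 ^ ((d : ℝ) / 2)) * t ^ (γ / α) := by
  rcases ht.eq_or_lt with rfl | ht
  · simp only [moll, le_refl, if_true, sub_self, norm_zero]
    positivity
  have hv : 0 < t ^ (2 / α) := by positivity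
  have hbx : b x = ∫ w, heatKernel (Euc d) (t ^ (2 / α)) w • b x := by
    rw [integral_smul_const, integral_heatKernel hv, one_smul]
  rw [moll_eq_integral_heatKernel ht, hbx]
  refine (norm_integral_smul_sub_integral_smul_le (h := fun w => C₀ * ‖w‖ ^ γ)
    (heatKernel_nonneg hv) (integrable_heatKernel_smul hv hγ0 hγ2 hb x)
    ((integrable_heatKernel hv).smul_const _)
    (by simpa only [mul_left_comm] using
      (integrable_heatKernel_mul_rpow_norm hv hγ0.le hγ2).const_mul C₀) fun w => ?_).trans ?_
  · simpa only [add_sub_cancel_left] using hb (x + w) x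
  · simp_rw [mul_left_comm _ C₀]
    rw [integral_const_mul, mul_assoc, show γ / α = 2 / α * (γ / 2) by ring,
      Real.rpow_mul ht.le]
    have := integral_heatKernel_mul_rpow_norm_le (V := Euc d) hv hγ0.le hγ2
    rw [finrank_euclideanSpace_fin] at this
    exact mul_le_mul_of_nonneg_left this hC₀

lemma norm_moll_sub_moll_le_add (hγ0 : 0 < γ) (hγ2 : γ ≤ 2) (hC₀ : 0 ≤ C₀)
    (hb : ∀ x y, ‖b x - b y‖ ≤ C₀ * ‖x - y‖ ^ γ) {p q : ℝ} (hp : 0 ≤ p) (hq : 0 ≤ q)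
    (z w : Euc d) :
    ‖moll d α b p z - moll d α b q w‖ ≤
      C₀ * ‖z - w‖ ^ γ + C₀ * (1 + 4 * 2 ^ ((d : ℝ) / 2)) * (p ^ (γ / α) + q ^ (γ / α)) := by
  have h1 := norm_moll_sub_moll_le (α := α) hγ0 hγ2 hb p z w
  have h2 := norm_moll_sub_le (α := α) hγ0 hγ2 hC₀ hb hp w
  have h3 := norm_moll_sub_le (α := α) hγ0 hγ2 hC₀ hb hq w
  have h4 := norm_sub_le_norm_sub_add_norm_sub (moll d α b p z) (moll d α b p w) (moll d α b q w)
  have h5 := norm_sub_le_norm_sub_add_norm_sub (moll d α b p w) (b w) (moll d α b q w)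
  rw [norm_sub_rev (b w)] at h5
  linarith

end Mollifier

lemma rpow_le_rpow_add_rpow_sub_one_mul {x σ γ : ℝ} (hx : 0 ≤ x) (hσ : 0 < σ) (hγ0 : 0 ≤ γ) (hγ1 : γ ≤ 1) :
    x ^ γ ≤ σ ^ γ + σ ^ (γ - 1) * x := by
  rcases le_total x σ with hxσ | hσx
  · have := Real.rpow_le_rpow hx hxσ hγ0
    have : 0 ≤ σ ^ (γ - 1) * x := by positivity
    linarith
  · have hx0 : 0 < x := hσ.trans_le hσx
    have h : x ^ γ = x ^ (γ - 1) * x := by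
      rw [Real.rpow_sub_one hx0.ne', div_mul_cancel₀ _ hx0.ne']
    have := Real.rpow_le_rpow_of_nonpos hσ hσx (by linarith : γ - 1 ≤ 0)
    have : x ^ (γ - 1) * x ≤ σ ^ (γ - 1) * x := mul_le_mul_of_nonneg_right this hx0.le
    have : 0 ≤ σ ^ γ := by positivity
    linarith

lemma gronwallBound_le_mul_exp {δ K ε x : ℝ} (hK : 0 ≤ K) (hε : 0 ≤ ε) :
    gronwallBound δ K ε x ≤ (δ + ε * x) * rexp (K * x) := by
  rcases hK.eq_or_lt with rfl | hK
  · simp [gronwallBound_K0]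
  rw [gronwallBound_of_K_ne_0 hK.ne', add_mul, add_le_add_iff_left, div_mul_eq_mul_div,
    div_le_iff₀ hK]
  -- `e^{Kx} - 1 ≤ K x e^{Kx}` is `1 - K x ≤ e^{-Kx}` multiplied by `e^{Kx}`
  have h := mul_le_mul_of_nonneg_left (Real.add_one_le_exp (-(K * x))) (Real.exp_pos (K * x)).le
  rw [← Real.exp_add, add_neg_cancel, Real.exp_zero] at h
  nlinarith

lemma max_norm_div_le_of_norm_deriv_right_le {E : Type*} [NormedAddCommGroup E] [NormedSpace ℝ E]
    {f f' : ℝ → E} {a b σ γ C c κ : ℝ} (hab : a ≤ b) (hσ : 0 < σ) (hγ0 : 0 ≤ γ) (hγ1 : γ ≤ 1)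
    (hC : 0 ≤ C) (hc : 0 ≤ c) (hf : ContinuousOn f (Icc a b))
    (hf' : ∀ r ∈ Ico a b, HasDerivWithinAt f (f' r) (Ici r) r)
    (bound : ∀ r ∈ Ico a b, ‖f' r‖ ≤ C * ‖f r‖ ^ γ + c * σ ^ γ)
    (hκ : (b - a) * σ ^ (γ - 1) ≤ κ) :
    max (‖f b‖ / σ) 1 ≤ (1 + (C + c) * κ) * rexp (C * κ) * max (‖f a‖ / σ) 1 := by
  have hκ0 : 0 ≤ κ := le_trans (by have := sub_nonneg.2 hab; positivity) hκ
  have hlin : ∀ r ∈ Ico a b, ‖f' r‖ ≤ C * σ ^ (γ - 1) * ‖f r‖ + (C + c) * σ ^ γ := fun r hr => by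
    have := mul_le_mul_of_nonneg_left (rpow_le_rpow_add_rpow_sub_one_mul (norm_nonneg (f r)) hσ hγ0 hγ1) hC
    linarith [bound r hr]
  have hgr := norm_le_gronwallBound_of_norm_deriv_right_le hf hf' le_rfl hlin b ⟨hab, le_rfl⟩
  have hσγ : σ ^ γ = σ * σ ^ (γ - 1) := by
    conv_lhs => rw [show γ = 1 + (γ - 1) by ring, Real.rpow_add hσ, Real.rpow_one]
  have hnorm : ‖f b‖ / σ ≤ (‖f a‖ / σ + (C + c) * κ) * rexp (C * κ) := by
    rw [div_le_iff₀ hσ]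
    calc ‖f b‖ ≤ (‖f a‖ + (C + c) * σ ^ γ * (b - a)) * rexp (C * σ ^ (γ - 1) * (b - a)) :=
          hgr.trans (gronwallBound_le_mul_exp (by positivity) (by positivity))
      _ ≤ (‖f a‖ + (C + c) * σ * κ) * rexp (C * κ) := by
          rw [hσγ, show C * σ ^ (γ - 1) * (b - a) = C * ((b - a) * σ ^ (γ - 1)) by ring,
            show (C + c) * (σ * σ ^ (γ - 1)) * (b - a) = (C + c) * σ * ((b - a) * σ ^ (γ - 1)) by
              ring]
          gcongr
      _ = (‖f a‖ / σ + (C + c) * κ) * rexp (C * κ) * σ := by field_simp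
  have hA : 1 ≤ (1 + (C + c) * κ) * rexp (C * κ) :=
    one_le_mul_of_one_le_of_one_le (by nlinarith) (Real.one_le_exp (by positivity))
  have hm := le_max_right (‖f a‖ / σ) 1
  refine max_le ?_ (by nlinarith)
  calc ‖f b‖ / σ ≤ (‖f a‖ / σ + (C + c) * κ) * rexp (C * κ) := hnorm
    _ ≤ _ := by
      rw [mul_comm _ (rexp _), mul_comm _ (rexp _), mul_assoc]
      gcongr
      have hB : 0 ≤ (C + c) * κ := by positivity
      nlinarith [le_max_left (‖f a‖ / σ) 1, mul_le_mul_of_nonneg_left hm hB]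

lemma max_norm_div_le_of_norm_deriv_le {E : Type*} [NormedAddCommGroup E] [NormedSpace ℝ E]
    {f f' : ℝ → E} {a b σ γ C c κ : ℝ} (hab : a ≤ b) (hσ : 0 < σ) (hγ0 : 0 ≤ γ) (hγ1 : γ ≤ 1)
    (hC : 0 ≤ C) (hc : 0 ≤ c) (hf : ∀ r ∈ Icc a b, HasDerivWithinAt f (f' r) (Icc a b) r)
    (bound : ∀ r ∈ Icc a b, ‖f' r‖ ≤ C * ‖f r‖ ^ γ + c * σ ^ γ)
    (hκ : (b - a) * σ ^ (γ - 1) ≤ κ) :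
    max (‖f b‖ / σ) 1 ≤ (1 + (C + c) * κ) * rexp (C * κ) * max (‖f a‖ / σ) 1 ∧
      max (‖f a‖ / σ) 1 ≤ (1 + (C + c) * κ) * rexp (C * κ) * max (‖f b‖ / σ) 1 := by
  have right_deriv : ∀ {g g' : ℝ → E}, (∀ r ∈ Icc a b, HasDerivWithinAt g (g' r) (Icc a b) r) →
      ∀ r ∈ Ico a b, HasDerivWithinAt g (g' r) (Ici r) r := fun hg r hr =>
    (hg r (Ico_subset_Icc_self hr)).mono_of_mem_nhdsWithin (Icc_mem_nhdsGE_of_mem hr)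
  have cont : ∀ {g g' : ℝ → E}, (∀ r ∈ Icc a b, HasDerivWithinAt g (g' r) (Icc a b) r) →
      ContinuousOn g (Icc a b) := fun hg r hr => (hg r hr).continuousWithinAt
  have hrefl : ∀ r ∈ Icc a b, a + b - r ∈ Icc a b := fun r hr =>
    ⟨by linarith [hr.2], by linarith [hr.1]⟩
  have hg : ∀ r ∈ Icc a b, HasDerivWithinAt (fun r => f (a + b - r)) (-f' (a + b - r))
      (Icc a b) r := fun r hr => by
    simpa [Function.comp_def] using
      (hf _ (hrefl r hr)).scomp r ((hasDerivWithinAt_id r _).const_sub (a + b)) hrefl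
  refine ⟨max_norm_div_le_of_norm_deriv_right_le hab hσ hγ0 hγ1 hC hc (cont hf) (right_deriv hf)
    (fun r hr => bound r (Ico_subset_Icc_self hr)) hκ, ?_⟩
  simpa using max_norm_div_le_of_norm_deriv_right_le hab hσ hγ0 hγ1 hC hc (cont hg) (right_deriv hg)
    (fun r hr => by simpa using bound _ (hrefl r (Ico_subset_Icc_self hr))) hκ

section Flows

variable {d : ℕ} {α γ C₀ : ℝ} {b : Euc d → Euc d}

lemma hasDerivWithinAt_flow_gap {s t : ℝ} {x y : Euc d} {θ u : ℝ → Euc d} (hs : 0 ≤ s)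
    (hθ : IsSol d (fun τ z => -moll d α b |τ| z) y θ)
    (hu : IsSol d (fun τ z => moll d α b |τ - (t - s)| z) x u) :
    ∀ p ∈ Icc s t, HasDerivWithinAt (fun p => θ p - u (t - p))
      (moll d α b (p - s) (u (t - p)) - moll d α b p (θ p)) (Icc s t) p := by
  intro p hp
  have hp0 : 0 ≤ p := hs.trans hp.1
  have hmaps : MapsTo (fun p => t - p) (Icc s t) (Ici 0) := fun q hq => sub_nonneg.2 hq.2
  have hθ' : HasDerivWithinAt θ (-moll d α b |p| (θ p)) (Ici 0) p := hθ.2 p hp0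
  have hu' : HasDerivWithinAt u (moll d α b |t - p - (t - s)| (u (t - p))) (Ici 0) (t - p) :=
    hu.2 _ (hmaps hp)
  rw [abs_of_nonneg hp0] at hθ'
  rw [show t - p - (t - s) = -(p - s) by ring, abs_neg, abs_of_nonneg (sub_nonneg.2 hp.1)] at hu'
  have h := (hθ'.mono fun q hq => hs.trans hq.1).sub
    (hu'.scomp p ((hasDerivWithinAt_id p _).const_sub t) hmaps)
  rwa [neg_one_smul, sub_neg_eq_add, neg_add_eq_sub] at h

lemma max_norm_flow_gap_le (hα : 0 < α) (hγ0 : 0 < γ) (hγ1 : γ ≤ 1) (hC₀ : 0 ≤ C₀)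
    (hb : ∀ x y, ‖b x - b y‖ ≤ C₀ * ‖x - y‖ ^ γ) {s t κ : ℝ} (hs : 0 ≤ s) (hst : s ≤ t)
    (ht : 0 < t) (hκ : t ^ (1 + (γ - 1) / α) ≤ κ) {x y : Euc d} {θ u : ℝ → Euc d}
    (hθ : IsSol d (fun τ z => -moll d α b |τ| z) y θ)
    (hu : IsSol d (fun τ z => moll d α b |τ - (t - s)| z) x u) :
    let A := (1 + (C₀ + 2 * (C₀ * (1 + 4 * 2 ^ ((d : ℝ) / 2)))) * κ) * rexp (C₀ * κ)
    max (‖θ t - x‖ / t ^ (1 / α)) 1 ≤ A * max (‖θ s - u (t - s)‖ / t ^ (1 / α)) 1 ∧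
      max (‖θ s - u (t - s)‖ / t ^ (1 / α)) 1 ≤ A * max (‖θ t - x‖ / t ^ (1 / α)) 1 := by
  set K := C₀ * (1 + 4 * 2 ^ ((d : ℝ) / 2))
  have hK : 0 ≤ K := by positivity
  have hσγ : (t ^ (1 / α)) ^ γ = t ^ (γ / α) := by rw [← Real.rpow_mul ht.le]; ring_nf
  have bound : ∀ p ∈ Icc s t, ‖moll d α b (p - s) (u (t - p)) - moll d α b p (θ p)‖ ≤
      C₀ * ‖θ p - u (t - p)‖ ^ γ + 2 * K * (t ^ (1 / α)) ^ γ := fun p hp => by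
    have hp0 : 0 ≤ p := hs.trans hp.1
    have h := norm_moll_sub_moll_le_add (α := α) hγ0 (by linarith) hC₀ hb (sub_nonneg.2 hp.1) hp0
      (u (t - p)) (θ p)
    have h1 : (p - s) ^ (γ / α) ≤ t ^ (γ / α) := by gcongr <;> linarith [hp.1, hp.2]
    have h2 : p ^ (γ / α) ≤ t ^ (γ / α) := by gcongr; exact hp.2
    rw [norm_sub_rev (u (t - p))] at h
    rw [hσγ]
    nlinarith [mul_le_mul_of_nonneg_left (add_le_add h1 h2) hK]
  have hκ' : (t - s) * (t ^ (1 / α)) ^ (γ - 1) ≤ κ := by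
    refine le_trans ?_ hκ
    rw [← Real.rpow_mul ht.le, Real.rpow_add ht, Real.rpow_one, one_div_mul_eq_div]
    gcongr
    linarith
  have h := max_norm_div_le_of_norm_deriv_le hst (by positivity) hγ0.le hγ1 hC₀
    (by positivity : 0 ≤ 2 * K) (hasDerivWithinAt_flow_gap hs hθ hu) bound hκ'
  simpa only [sub_self, hu.1] using h

end Flows

lemma min_rpow_le_mul_min {m m' A lam w : ℝ} (hm : 0 ≤ m) (hm' : 0 ≤ m') (hA : 1 ≤ A)
    (hlam : 0 ≤ lam) (hw : 0 ≤ w) (h : m' ≤ A * m) :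
    min (m' ^ lam) w ≤ A ^ lam * min (m ^ lam) w := by
  have h' : m' ^ lam ≤ A ^ lam * m ^ lam := by
    rw [← Real.mul_rpow (by linarith) hm]; exact Real.rpow_le_rpow hm' h hlam
  rw [mul_min_of_nonneg _ _ (Real.rpow_nonneg (by linarith) _)]
  exact min_le_min h' (le_mul_of_one_le_left hw (Real.one_le_rpow hA hlam))

lemma rpow_neg_le_mul_rpow_neg {m m' A n : ℝ} (hm : 0 < m) (hm' : 0 < m') (hA : 0 < A) (hn : 0 ≤ n)
    (h : m ≤ A * m') : m' ^ (-n) ≤ A ^ n * m ^ (-n) := by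
  have := Real.rpow_le_rpow_of_nonpos hm h (neg_nonpos.2 hn)
  rwa [Real.mul_rpow hA.le hm'.le, Real.rpow_neg hA.le, inv_mul_le_iff₀ (by positivity)] at this

lemma Kker_eq {d : ℕ} {α lam t : ℝ} (hlam : 0 ≤ lam) (ht : 0 < t) (x y : Euc d) :
    Kker d α lam t x y = min ((max (‖y - x‖ / t ^ (1 / α)) 1) ^ lam) (t ^ (-(lam / α))) *
      (t ^ (-(d : ℝ) / α) * (max (‖y - x‖ / t ^ (1 / α)) 1) ^ (-((d : ℝ) + α))) := by
  have hσ : 0 < t ^ (1 / α) := by positivity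
  rw [Kker, Gfun, norm_smul, norm_inv, Real.norm_of_nonneg hσ.le, inv_mul_eq_div,
    Real.rpow_max (by positivity) zero_le_one hlam, Real.one_rpow, neg_add']

lemma Kker_le_mul_of_max_le {d : ℕ} {α lam t A : ℝ} (hα : 0 < α) (hlam : 0 ≤ lam) (ht : 0 < t)
    (hA : 1 ≤ A) {x y x' y' : Euc d}
    (h : max (‖y' - x'‖ / t ^ (1 / α)) 1 ≤ A * max (‖y - x‖ / t ^ (1 / α)) 1)
    (h' : max (‖y - x‖ / t ^ (1 / α)) 1 ≤ A * max (‖y' - x'‖ / t ^ (1 / α)) 1) :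
    Kker d α lam t x' y' ≤ A ^ (lam + d + α) * Kker d α lam t x y := by
  have hm := zero_lt_one.trans_le (le_max_right (‖y - x‖ / t ^ (1 / α)) 1)
  have hm' := zero_lt_one.trans_le (le_max_right (‖y' - x'‖ / t ^ (1 / α)) 1)
  rw [Kker_eq hlam ht, Kker_eq hlam ht, add_assoc, Real.rpow_add (by linarith)]
  calc _ ≤ A ^ lam * min ((max (‖y - x‖ / t ^ (1 / α)) 1) ^ lam) (t ^ (-(lam / α))) *
        (t ^ (-(d : ℝ) / α) * (A ^ ((d : ℝ) + α) *
          (max (‖y - x‖ / t ^ (1 / α)) 1) ^ (-((d : ℝ) + α)))) := by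
        gcongr ?_ * (_ * ?_)
        · exact min_rpow_le_mul_min hm.le hm'.le hA hlam (by positivity) h
        · exact rpow_neg_le_mul_rpow_neg hm hm' (by linarith) (by positivity) h'
    _ = _ := by ring

theorem kernel_flow_comparison_general
    (d : ℕ) (α γ C₀ : ℝ)
    (hα : α ∈ Set.Ioo (0 : ℝ) 2) (hγ : γ ∈ Set.Ioc (0 : ℝ) 1) (hC₀ : 0 < C₀)
    (b : Euc d → Euc d)
    (hb_hol : ∀ x y, ‖b x - b y‖ ≤ C₀ * ‖x - y‖ ^ γ)
    (hbal : 1 < α + γ) :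
    ∀ lam ∈ Set.Ico (0 : ℝ) α, ∀ T > (0 : ℝ), ∃ C₁ > (0 : ℝ), ∃ C₂ > (0 : ℝ),
      ∀ t ∈ Set.Ioc (0 : ℝ) T, ∀ s ∈ Set.Icc (0 : ℝ) t, ∀ x y : Euc d,
      ∀ θ : ℝ → Euc d, IsSol d (fun τ z => -moll d α b |τ| z) y θ →
      ∀ u : ℝ → Euc d, IsSol d (fun τ z => moll d α b |τ - (t - s)| z) x u →
        C₁ * Kker d α lam t x (θ t) ≤ Kker d α lam t (u (t - s)) (θ s) ∧
        Kker d α lam t (u (t - s)) (θ s) ≤ C₂ * Kker d α lam t x (θ t) := by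
  intro lam hlam T hT
  have hδ : 0 ≤ 1 + (γ - 1) / α := by
    rw [one_add_div hα.1.ne']; exact div_nonneg (by linarith) hα.1.le
  set κ := T ^ (1 + (γ - 1) / α)
  set A := (1 + (C₀ + 2 * (C₀ * (1 + 4 * 2 ^ ((d : ℝ) / 2)))) * κ) * rexp (C₀ * κ)
  have hA : 1 ≤ A :=
    one_le_mul_of_one_le_of_one_le (by simp only [le_add_iff_nonneg_right]; positivity)
      (Real.one_le_exp (by positivity))
  have hAe : 0 < A ^ (lam + d + α) := by positivity
  refine ⟨(A ^ (lam + d + α))⁻¹, inv_pos.2 hAe, A ^ (lam + d + α), hAe, ?_⟩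
  rintro t ⟨ht, htT⟩ s ⟨hs, hst⟩ x y θ hθ u hu
  obtain ⟨hgap, hgap'⟩ := max_norm_flow_gap_le hα.1 hγ.1 hγ.2 hC₀.le hb_hol hs hst ht
    (Real.rpow_le_rpow ht.le htT hδ) hθ hu
  exact ⟨(inv_mul_le_iff₀ hAe).2 (Kker_le_mul_of_max_le hα.1 hlam.1 ht hA hgap hgap'),
    Kker_le_mul_of_max_le hα.1 hlam.1 ht hA hgap' hgap⟩

theorem kernel_flow_comparison
    (d : ℕ) (hd : 1 ≤ d) (α γ C₀ : ℝ)
    (hα : α ∈ Set.Ioo (0 : ℝ) 2) (hγ : γ ∈ Set.Ioc (0 : ℝ) 1) (hC₀ : 0 < C₀)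
    (b : Euc d → Euc d)
    (hb_bdd : ∀ x, ‖b x‖ ≤ C₀)
    (hb_hol : ∀ x y, ‖b x - b y‖ ≤ C₀ * ‖x - y‖ ^ γ)
    (hbal : 1 < α + γ) :
    ∀ lam ∈ Set.Ico (0 : ℝ) α, ∀ T > (0 : ℝ), ∃ C₁ > (0 : ℝ), ∃ C₂ > (0 : ℝ),
      ∀ t ∈ Set.Ioc (0 : ℝ) T, ∀ s ∈ Set.Icc (0 : ℝ) t, ∀ x y : Euc d,
      ∀ θ : ℝ → Euc d, IsSol d (fun τ z => -moll d α b |τ| z) y θ →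
      ∀ u : ℝ → Euc d, IsSol d (fun τ z => moll d α b |τ - (t - s)| z) x u →
        C₁ * Kker d α lam t x (θ t) ≤ Kker d α lam t (u (t - s)) (θ s) ∧
        Kker d α lam t (u (t - s)) (θ s) ≤ C₂ * Kker d α lam t x (θ t) :=
  kernel_flow_comparison_general d α γ C₀ hα hγ hC₀ b hb_hol hbal
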